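/- Let (G,P) be a quasi-lattice ordered group and let μ be a finitely additive probability measure on (P,B_P) such that the family (μ(pP))_{p∈P} is summable. For p ∈ P set w_p = inf{μ(Ω) : Ω ∈ B_P, p ∈ Ω}. Then the family (w_p)_{p∈P} is summable and ∑_{p∈P} w_p ≥ 1. -/

import Mathlib

/-- The order on `G` induced by the submonoid `P`: `g ≤ h` iff `g⁻¹ * h ∈ P`. -/
def QLe {G : Type*} [Group G] (P : Submonoid G) (g h : G) : Prop := g⁻¹ * h ∈ P

/-- `u` is the least upper bound of `g` and `h` with respect to `QLe P`. -/
def QLub {G : Type*} [Group G] (P : Submonoid G) (g h u : G) : Prop :=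
  QLe P g u ∧ QLe P h u ∧ ∀ v, QLe P g v → QLe P h v → QLe P u v

/-- `(G, P)` is a quasi-lattice ordered group. -/
structure QuasiLatticeOrdered {G : Type*} [Group G] (P : Submonoid G) : Prop where
  gen : Subgroup.closure (P : Set G) = ⊤
  cap : ∀ g ∈ P, g⁻¹ ∈ P → g = 1
  lub : ∀ g h : G, (∃ u, QLe P g u ∧ QLe P h u) → ∃ u, QLub P g h u

/-- Membership in the algebra `B_P` of subsets of `P` generated by the sets
`pP = {x | p⁻¹ x ∈ P}`, `p ∈ P`: the smallest collection of subsets containing the sets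
`pP` and closed under complements in `P`, finite unions and finite intersections. -/
inductive MemBP {G : Type*} [Group G] (P : Submonoid G) : Set G → Prop
  | basic (p : G) (hp : p ∈ P) : MemBP P {x | QLe P p x}
  | compl (Ω : Set G) : MemBP P Ω → MemBP P ((P : Set G) \ Ω)
  | union (Ω₁ Ω₂ : Set G) : MemBP P Ω₁ → MemBP P Ω₂ → MemBP P (Ω₁ ∪ Ω₂)
  | inter (Ω₁ Ω₂ : Set G) : MemBP P Ω₁ → MemBP P Ω₂ → MemBP P (Ω₁ ∩ Ω₂)

/-- For a finite set `J ⊆ P \ {e}`, `Ω_J = ⋂_{q ∈ J} (P \ qP)`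
(with the convention `Ω_∅ = P`). -/
def OmegaJ {G : Type*} [Group G] (P : Submonoid G) (J : Finset G) : Set G :=
  (P : Set G) ∩ ⋂ q ∈ J, {x | QLe P q x}ᶜ

/-- `w_p = inf { μ(Ω) : Ω ∈ B_P, p ∈ Ω }`. -/
noncomputable def wt {G : Type*} [Group G] (P : Submonoid G) (μ : Set G → ℝ) (p : G) : ℝ :=
  sInf {r : ℝ | ∃ Ω : Set G, MemBP P Ω ∧ p ∈ Ω ∧ μ Ω = r}

/-!
Fix a finite `F ⊆ P`. Every `x ∈ P` lies above the least upper bound `m` of the elements of `F`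
below `x`, and `x` and `m` lie below the same elements of `F`; since there are only finitely many
such `m`, this yields a finite `M ⊆ P` such that, for every finite `J ⊆ P`, the atoms of
`{qP : q ∈ J}` containing the points of `M`, together with `⋃_{q ∈ J \ F} qP`, cover `P`.
Every `Ω ∈ B_P` is a union of such atoms for `J` large, so `μ(atom_J m) → w_m` as `J` grows;
choosing `F` so that the tail `∑_{q ∉ F} μ(qP)` is small gives `1 ≤ ∑_{m ∈ M} w_m + ε`.
-/

open Filter Topology

section QuasiLattice

variable {G : Type*} [Group G] {P : Submonoid G}

namespace QLe

theorem refl (p : G) : QLe P p p := by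
  simp [QLe, one_mem]

theorem trans {p q r : G} (h₁ : QLe P p q) (h₂ : QLe P q r) : QLe P p r := by
  simpa [QLe, mul_assoc] using mul_mem h₁ h₂

theorem mem_of_mem {p x : G} (h : QLe P p x) (hp : p ∈ P) : x ∈ P := by
  simpa [QLe] using mul_mem hp h

end QLe

theorem QuasiLatticeOrdered.exists_lub_finset (hQL : QuasiLatticeOrdered P) (S : Finset P) :
    ∃ m : P, ∀ x ∈ P, (∀ q ∈ S, QLe P q x) → (∀ q ∈ S, QLe P q m) ∧ QLe P m x := by
  classical
  induction S using Finset.induction_on with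
  | empty => exact ⟨1, fun x hx _ => ⟨by simp, by simpa [QLe] using hx⟩⟩
  | insert a S _ ih =>
    obtain ⟨m, hm⟩ := ih
    by_cases hbdd : ∃ x ∈ P, ∀ q ∈ insert a S, QLe P q x
    swap
    · exact ⟨1, fun x hx hub => (hbdd ⟨x, hx, hub⟩).elim⟩
    obtain ⟨x₀, hx₀, hub₀⟩ := hbdd
    obtain ⟨hSm, hmx₀⟩ := hm x₀ hx₀ fun q hq => hub₀ q (Finset.mem_insert_of_mem hq)
    obtain ⟨u, hau, hmu, hu⟩ := hQL.lub a m ⟨x₀, hub₀ a (Finset.mem_insert_self a S), hmx₀⟩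
    refine ⟨⟨u, hau.mem_of_mem a.2⟩, fun x hx hub => ⟨fun q hq => ?_, ?_⟩⟩
    · rcases Finset.mem_insert.1 hq with rfl | hq
      · exact hau
      · exact (hSm q hq).trans hmu
    · exact hu x (hub a (Finset.mem_insert_self a S))
        (hm x hx fun q hq => hub q (Finset.mem_insert_of_mem hq)).2

namespace MemBP

variable {Ω Ω₁ Ω₂ : Set G}

theorem subset (h : MemBP P Ω) : Ω ⊆ P := by
  induction h with
  | basic p hp => exact fun x hx => QLe.mem_of_mem hx hp
  | compl => exact Set.sdiff_subset
  | union _ _ _ _ ih₁ ih₂ => exact Set.union_subset ih₁ ih₂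
  | inter _ _ _ _ ih₁ _ => exact Set.inter_subset_left.trans ih₁

theorem submonoid : MemBP P (P : Set G) := by
  simpa [QLe] using MemBP.basic (P := P) 1 P.one_mem

theorem empty : MemBP P (∅ : Set G) := by
  simpa using submonoid.compl

theorem sdiff (h₁ : MemBP P Ω₁) (h₂ : MemBP P Ω₂) : MemBP P (Ω₁ \ Ω₂) := by
  rw [← Set.inter_eq_left.2 h₁.subset, Set.inter_sdiff_assoc]
  exact h₁.inter _ _ h₂.compl

theorem biUnion {ι : Type*} (s : Finset ι) {A : ι → Set G} (h : ∀ i ∈ s, MemBP P (A i)) :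
    MemBP P (⋃ i ∈ s, A i) := by
  classical
  induction s using Finset.induction_on with
  | empty => simpa using empty
  | insert a s _ ih =>
    rw [Finset.set_biUnion_insert]
    exact (h a (Finset.mem_insert_self a s)).union _ _
      (ih fun i hi => h i (Finset.mem_insert_of_mem hi))

end MemBP

/-- The atom containing `p` of the finite algebra generated by the sets `qP`, `q ∈ J`. -/
def atom (J : Finset P) (p : G) : Set G :=
  {x | x ∈ P ∧ ∀ q ∈ J, QLe P q x ↔ QLe P q p}

section Atom

variable {J K : Finset P} {p x : G}

theorem mem_atom_self (hp : p ∈ P) : p ∈ atom J p :=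
  ⟨hp, fun _ _ => Iff.rfl⟩

theorem atom_anti (h : K ⊆ J) : atom J p ⊆ atom K p :=
  fun _ hx => ⟨hx.1, fun q hq => hx.2 q (h hq)⟩

theorem mem_atom_comm (hx : x ∈ atom J p) (hp : p ∈ P) : p ∈ atom J x :=
  ⟨hp, fun q hq => (hx.2 q hq).symm⟩

theorem memBP_atom (J : Finset P) (p : G) : MemBP P (atom J p) := by
  classical
  induction J using Finset.induction_on with
  | empty => simp [atom, MemBP.submonoid]
  | insert a J _ ih =>
    have hsplit : atom (insert a J) p = atom J p ∩ {x | x ∈ P ∧ (QLe P a x ↔ QLe P a p)} := by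
      ext x
      simp only [atom, Finset.mem_insert, forall_eq_or_imp, Set.mem_inter_iff, Set.mem_ofPred_eq]
      tauto
    rw [hsplit]
    refine ih.inter _ _ ?_
    by_cases ha : QLe P a p
    · simpa [ha, and_iff_right_of_imp fun h : QLe P a _ => h.mem_of_mem a.2]
        using MemBP.basic (a : G) a.2
    · simp only [ha, iff_false]
      exact (MemBP.basic (a : G) a.2).compl

theorem MemBP.exists_finset_atom_subset {Ω : Set G} (h : MemBP P Ω) :
    ∃ K : Finset P, ∀ p ∈ Ω, atom K p ⊆ Ω := by
  classical
  induction h with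
  | basic a ha =>
    exact ⟨{⟨a, ha⟩}, fun p hp x hx => (hx.2 ⟨a, ha⟩ (Finset.mem_singleton_self _)).2 hp⟩
  | compl Ω hΩ ih =>
    obtain ⟨K, hK⟩ := ih
    refine ⟨K, fun p hp x hx => ⟨hx.1, fun hxΩ => hp.2 ?_⟩⟩
    exact hK x hxΩ (mem_atom_comm hx hp.1)
  | union Ω₁ Ω₂ _ _ ih₁ ih₂ =>
    obtain ⟨K₁, hK₁⟩ := ih₁
    obtain ⟨K₂, hK₂⟩ := ih₂
    refine ⟨K₁ ∪ K₂, fun p hp => ?_⟩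
    rcases hp with hp | hp
    · exact (atom_anti Finset.subset_union_left).trans ((hK₁ p hp).trans Set.subset_union_left)
    · exact (atom_anti Finset.subset_union_right).trans ((hK₂ p hp).trans Set.subset_union_right)
  | inter Ω₁ Ω₂ _ _ ih₁ ih₂ =>
    obtain ⟨K₁, hK₁⟩ := ih₁
    obtain ⟨K₂, hK₂⟩ := ih₂
    exact ⟨K₁ ∪ K₂, fun p hp => Set.subset_inter
      ((atom_anti Finset.subset_union_left).trans (hK₁ p hp.1))
      ((atom_anti Finset.subset_union_right).trans (hK₂ p hp.2))⟩

theorem mem_atom_of_qle {F : Finset P} (hpx : QLe P p x) (hx : x ∈ atom F p)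
    (hJ : ∀ q ∈ J, q ∉ F → ¬ QLe P q x) : x ∈ atom J p := by
  refine ⟨hx.1, fun q hq => ?_⟩
  by_cases hqF : q ∈ F
  · exact hx.2 q hqF
  · exact iff_of_false (hJ q hq hqF) fun hqp => hJ q hq hqF (hqp.trans hpx)

end Atom

theorem QuasiLatticeOrdered.exists_atom_cover (hQL : QuasiLatticeOrdered P) (F : Finset P) :
    ∃ M : Finset P, ∀ x ∈ P, ∃ m ∈ M, QLe P m x ∧ x ∈ atom F m := by
  classical
  choose lub hlub using hQL.exists_lub_finset
  refine ⟨F.powerset.image lub, fun x hx => ?_⟩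
  set S := F.filter fun q : P => QLe P q x
  have hSx : ∀ q ∈ S, QLe P q x := fun q hq => (Finset.mem_filter.1 hq).2
  obtain ⟨hSm, hmx⟩ := hlub S x hx hSx
  refine ⟨lub S, Finset.mem_image_of_mem _ (Finset.mem_powerset.2 (Finset.filter_subset _ _)),
    hmx, hx, fun q hq => ⟨fun hqx => hSm q (Finset.mem_filter.2 ⟨hq, hqx⟩), ?_⟩⟩
  exact fun hqm => hqm.trans hmx

structure IsFinitelyAdditive (P : Submonoid G) (μ : Set G → ℝ) : Prop where
  nonneg : ∀ Ω : Set G, MemBP P Ω → 0 ≤ μ Ω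
  add : ∀ Ω₁ Ω₂ : Set G, MemBP P Ω₁ → MemBP P Ω₂ → Disjoint Ω₁ Ω₂ → μ (Ω₁ ∪ Ω₂) = μ Ω₁ + μ Ω₂

namespace IsFinitelyAdditive

variable {μ : Set G → ℝ} (hμ : IsFinitelyAdditive P μ) {Ω₁ Ω₂ : Set G}
include hμ

theorem empty : μ ∅ = 0 := by
  simpa using hμ.add ∅ ∅ .empty .empty (Set.disjoint_empty _)

theorem mono (h₁ : MemBP P Ω₁) (h₂ : MemBP P Ω₂) (h : Ω₁ ⊆ Ω₂) : μ Ω₁ ≤ μ Ω₂ := by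
  have hsplit := hμ.add Ω₁ (Ω₂ \ Ω₁) h₁ (h₂.sdiff h₁) Set.disjoint_sdiff_right
  rw [Set.union_sdiff_cancel h] at hsplit
  linarith [hμ.nonneg _ (h₂.sdiff h₁)]

theorem union_le (h₁ : MemBP P Ω₁) (h₂ : MemBP P Ω₂) : μ (Ω₁ ∪ Ω₂) ≤ μ Ω₁ + μ Ω₂ := by
  have hsplit := hμ.add Ω₁ (Ω₂ \ Ω₁) h₁ (h₂.sdiff h₁) Set.disjoint_sdiff_right
  rw [Set.union_sdiff_self] at hsplit
  linarith [hμ.mono (h₂.sdiff h₁) h₂ Set.sdiff_subset]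

theorem biUnion_le {ι : Type*} (s : Finset ι) {A : ι → Set G} (h : ∀ i ∈ s, MemBP P (A i)) :
    μ (⋃ i ∈ s, A i) ≤ ∑ i ∈ s, μ (A i) := by
  classical
  induction s using Finset.induction_on with
  | empty => simp [hμ.empty]
  | insert a s ha ih =>
    have hs : ∀ i ∈ s, MemBP P (A i) := fun i hi => h i (Finset.mem_insert_of_mem hi)
    rw [Finset.set_biUnion_insert, Finset.sum_insert ha]
    exact (hμ.union_le (h a (Finset.mem_insert_self a s)) (.biUnion s hs)).trans
      (add_le_add_right (ih hs) _)

theorem wt_nonneg (p : G) : 0 ≤ wt P μ p :=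
  Real.sInf_nonneg fun _ ⟨Ω, hΩ, _, hr⟩ => hr ▸ hμ.nonneg Ω hΩ

theorem wt_le {p : G} {Ω : Set G} (hΩ : MemBP P Ω) (hp : p ∈ Ω) : wt P μ p ≤ μ Ω :=
  csInf_le ⟨0, fun _ ⟨Ω', hΩ', _, hr⟩ => hr ▸ hμ.nonneg Ω' hΩ'⟩ ⟨Ω, hΩ, hp, rfl⟩

theorem tendsto_atom (p : P) :
    Tendsto (fun J : Finset P => μ (atom J p)) atTop (𝓝 (wt P μ p)) := by
  refine tendsto_order.2 ⟨fun a ha => .of_forall fun J =>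
    ha.trans_le (hμ.wt_le (memBP_atom J p) (mem_atom_self p.2)), fun a ha => ?_⟩
  obtain ⟨_, ⟨Ω, hΩ, hpΩ, rfl⟩, hΩa⟩ :=
    exists_lt_of_csInf_lt (s := {r | ∃ Ω, MemBP P Ω ∧ (p : G) ∈ Ω ∧ μ Ω = r})
      ⟨_, _, .submonoid, p.2, rfl⟩ ha
  obtain ⟨K, hK⟩ := hΩ.exists_finset_atom_subset
  filter_upwards [eventually_ge_atTop K] with J hKJ
  exact (hμ.mono (memBP_atom J p) hΩ ((atom_anti hKJ).trans (hK p hpΩ))).trans_lt hΩa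

theorem exists_le_sum_atom_add_sum [DecidableEq P] (hQL : QuasiLatticeOrdered P) (F : Finset P) :
    ∃ M : Finset P, ∀ J : Finset P,
      μ P ≤ ∑ m ∈ M, μ (atom J m) + ∑ q ∈ J \ F, μ {x | QLe P q x} := by
  obtain ⟨M, hM⟩ := hQL.exists_atom_cover F
  refine ⟨M, fun J => ?_⟩
  set U := ⋃ q ∈ J \ F, {x | QLe P q x}
  have hU : MemBP P U := .biUnion _ fun q _ => .basic (q : G) q.2
  have hA : MemBP P (⋃ m ∈ M, atom J m) := .biUnion _ fun m _ => memBP_atom J m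
  have hcover : (P : Set G) ⊆ (⋃ m ∈ M, atom J m) ∪ U := by
    intro x hx
    by_cases hxU : x ∈ U
    · exact Or.inr hxU
    obtain ⟨m, hmM, hmx, hxm⟩ := hM x hx
    refine Or.inl (Set.mem_iUnion₂.2 ⟨m, hmM, mem_atom_of_qle hmx hxm fun q hqJ hqF hqx => ?_⟩)
    exact hxU (Set.mem_iUnion₂.2 ⟨q, Finset.mem_sdiff.2 ⟨hqJ, hqF⟩, hqx⟩)
  calc μ P ≤ μ ((⋃ m ∈ M, atom J m) ∪ U) := hμ.mono .submonoid (.union _ _ hA hU) hcover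
    _ ≤ μ (⋃ m ∈ M, atom J m) + μ U := hμ.union_le hA hU
    _ ≤ _ := add_le_add (hμ.biUnion_le _ fun m _ => memBP_atom J m)
        (hμ.biUnion_le _ fun q _ => .basic (q : G) q.2)

end IsFinitelyAdditive

end QuasiLattice

/-- If `μ` is a finitely additive probability measure on `(P, B_P)` with `(μ(pP))_{p ∈ P}`
summable, then `(w_p)_{p ∈ P}` is summable and `∑_{p ∈ P} w_p ≥ 1`. -/
theorem stmt6 {G : Type*} [Group G] (P : Submonoid G) (hQL : QuasiLatticeOrdered P)
    (μ : Set G → ℝ)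
    (hpos : ∀ Ω : Set G, MemBP P Ω → 0 ≤ μ Ω)
    (hone : μ (P : Set G) = 1)
    (hadd : ∀ Ω₁ Ω₂ : Set G, MemBP P Ω₁ → MemBP P Ω₂ → Disjoint Ω₁ Ω₂ →
      μ (Ω₁ ∪ Ω₂) = μ Ω₁ + μ Ω₂)
    (hsum : Summable fun p : P => μ {x | QLe P (p : G) x}) :
    (Summable fun p : P => wt P μ (p : G)) ∧ 1 ≤ ∑' p : P, wt P μ (p : G) := by
  classical
  have hμ : IsFinitelyAdditive P μ := ⟨hpos, hadd⟩
  have hw : Summable fun p : P => wt P μ p :=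
    .of_nonneg_of_le (fun p => hμ.wt_nonneg p)
      (fun p => hμ.wt_le (.basic (p : G) p.2) (QLe.refl (p : G))) hsum
  refine ⟨hw, le_of_forall_pos_le_add fun ε hε => ?_⟩
  obtain ⟨F, hF⟩ := summable_iff_vanishing_norm.1 hsum (ε / 2) (half_pos hε)
  obtain ⟨M, hM⟩ := hμ.exists_le_sum_atom_add_sum hQL F
  have hconv := tendsto_finsetSum M fun m _ => hμ.tendsto_atom m
  obtain ⟨J, hJ⟩ := (hconv.eventually (gt_mem_nhds (lt_add_of_pos_right _ (half_pos hε)))).exists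
  have htail := (le_abs_self _).trans_lt (hF (J \ F) Finset.sdiff_disjoint)
  have hM_le := hw.sum_le_tsum M fun p _ => hμ.wt_nonneg p
  linarith [hM J]
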